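/- In the star network setting, if θ ≥ 0 and (p̃, λ) satisfies the KKT conditions at θ, then λ_j < max_{1≤k≤n_j} Δ_{j,k} for every j ∈ {1,…,J}. -/

import Mathlib

/-- The star network setting of Abhishek–Hajek. -/
structure StarSetting where
  /-- number of arms -/
  J : ℕ
  hJ : 0 < J
  /-- number of leaf items on arm `j` -/
  n : Fin J → ℕ
  hn : ∀ j, 0 < n j
  /-- winning single-item bids -/
  b : (j : Fin J) → Fin (n j) → ℝ
  /-- losing single-item bids -/
  bl : (j : Fin J) → Fin (n j) → ℝ
  /-- losing single-item bid for item zero -/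
  bl0 : ℝ
  /-- package bids -/
  C : Fin J → ℝ
  h_bid : ∀ j k, bl j k ≤ b j k
  h_pos : ∀ j, ∃ k, bl j k < b j k

namespace StarSetting

/-- Index of items (= winning buyers): `none` is item zero, `some ⟨j,k⟩` is item `(j,k)`. -/
abbrev Idx (S : StarSetting) := Option ((j : Fin S.J) × Fin (S.n j))

variable (S : StarSetting)

noncomputable def Δ (j : Fin S.J) (k : Fin (S.n j)) : ℝ := S.b j k - S.bl j k

noncomputable def Δmax (j : Fin S.J) : ℝ :=
  Finset.univ.sup' ⟨⟨0, S.hn j⟩, Finset.mem_univ _⟩ (S.Δ j)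

noncomputable def v0 : ℝ :=
  max S.bl0 (Finset.univ.sup' ⟨⟨0, S.hJ⟩, Finset.mem_univ _⟩
    fun j => S.C j - ∑ k, S.b j k)

noncomputable def η (j : Fin S.J) : ℝ := S.v0 + (∑ k, S.b j k) - S.C j

/-- The Vikrey price vector `v_θ`. -/
noncomputable def vick (θ : ℝ) : EuclideanSpace ℝ S.Idx :=
  WithLp.toLp 2 fun i => Option.elim i S.v0 fun jk => max (S.b jk.1 jk.2 - S.η jk.1 - θ) (S.bl jk.1 jk.2)

/-- The core region `K_θ`. -/
def coreK (θ : ℝ) : Set (EuclideanSpace ℝ S.Idx) :=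
  { p | (∀ j, S.C j ≤ p none + ∑ k, p (some ⟨j, k⟩)) ∧
        (∀ j k, S.bl j k ≤ p (some ⟨j, k⟩) ∧ p (some ⟨j, k⟩) ≤ S.b j k) ∧
        S.v0 ≤ p none ∧ p none ≤ S.v0 + θ }

/-- The expanded core region (IR constraint of buyer zero dropped). -/
def expandedK : Set (EuclideanSpace ℝ S.Idx) :=
  { p | (∀ j, S.C j ≤ p none + ∑ k, p (some ⟨j, k⟩)) ∧
        (∀ j k, S.bl j k ≤ p (some ⟨j, k⟩) ∧ p (some ⟨j, k⟩) ≤ S.b j k) ∧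
        S.v0 ≤ p none }

/-- The KKT conditions at `θ` for the projection onto the expanded core. -/
def KKT (θ : ℝ) (p : EuclideanSpace ℝ S.Idx) (lam : Fin S.J → ℝ) : Prop :=
  (∀ j, 0 ≤ lam j) ∧
  p none = S.v0 + ∑ j, lam j ∧
  (∀ j k, p (some ⟨j, k⟩) = min (S.vick θ (some ⟨j, k⟩) + lam j) (S.b j k)) ∧
  (∀ j, ∑ k, max (min (S.η j + θ) (S.Δ j k) - lam j) 0 ≤ (∑ i, lam i) + S.η j) ∧
  (∀ j, 0 < lam j → (∑ i, lam i) + S.η j = ∑ k, max (min (S.η j + θ) (S.Δ j k) - lam j) 0)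

/-- The seller's revenue for a winner price vector. -/
noncomputable def revenue (p : EuclideanSpace ℝ S.Idx) : ℝ :=
  p none + ∑ j, ∑ k, p (some ⟨j, k⟩)

/-- The minimum revenue core at `θ`. -/
def MRC (θ : ℝ) : Set (EuclideanSpace ℝ S.Idx) :=
  { p | p ∈ S.coreK θ ∧ ∀ q ∈ S.coreK θ, S.revenue p ≤ S.revenue q }

end StarSetting

/-- `q` is a point of `A` nearest to `v` (Euclidean projection of `v` onto `A`). -/
def IsProjOn {E : Type*} [NormedAddCommGroup E] (A : Set E) (v q : E) : Prop :=
  q ∈ A ∧ ∀ r ∈ A, dist v q ≤ dist v r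

/-- `f` is piecewise linear on `[0, ∞)`: there are finitely many breakpoints
`0 = t 0 < t 1 < ⋯ < t m` such that `f` is affine on each `[t i, t (i+1)]` and on `[t m, ∞)`. -/
def PiecewiseLinearOnIci (f : ℝ → ℝ) : Prop :=
  ∃ m : ℕ, ∃ t : Fin (m + 1) → ℝ, t 0 = 0 ∧ StrictMono t ∧
    (∀ i : Fin m, ∃ a c : ℝ, ∀ x ∈ Set.Icc (t i.castSucc) (t i.succ), f x = a * x + c) ∧
    (∃ a c : ℝ, ∀ x ∈ Set.Ici (t (Fin.last m)), f x = a * x + c)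

/-! If `λ_j ≥ max_k Δ_{j,k} > 0`, every summand `max (min (η_j + θ) Δ_{j,k} - λ_j) 0` of the
complementary-slackness equation for arm `j` vanishes, while its left side
`∑ λ_i + η_j ≥ λ_j` is positive. -/

namespace StarSetting

variable (S : StarSetting)

theorem Δ_le_Δmax (j : Fin S.J) (k : Fin (S.n j)) : S.Δ j k ≤ S.Δmax j :=
  Finset.le_sup' _ (Finset.mem_univ k)

theorem Δmax_pos (j : Fin S.J) : 0 < S.Δmax j := by
  obtain ⟨k, hk⟩ := S.h_pos j
  exact (sub_pos.mpr hk).trans_le (S.Δ_le_Δmax j k)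

theorem η_nonneg (j : Fin S.J) : 0 ≤ S.η j := by
  have hC : S.C j - ∑ k, S.b j k ≤ S.v0 :=
    (Finset.le_sup' (fun i => S.C i - ∑ k, S.b i k) (Finset.mem_univ j)).trans
      (le_max_right _ _)
  unfold η
  linarith

end StarSetting

theorem kkt_lam_lt_maxDelta_general (S : StarSetting) (θ : ℝ)
    (p : EuclideanSpace ℝ S.Idx) (lam : Fin S.J → ℝ)
    (h : S.KKT θ p lam) :
    ∀ j, lam j < S.Δmax j := by
  obtain ⟨hlam, -, -, -, hslack⟩ := h
  intro j
  by_contra! hle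
  have hlam_pos : 0 < lam j := (S.Δmax_pos j).trans_le hle
  have hzero : ∑ k, max (min (S.η j + θ) (S.Δ j k) - lam j) 0 = 0 :=
    Finset.sum_eq_zero fun k _ =>
      max_eq_right (by linarith [min_le_right (S.η j + θ) (S.Δ j k), S.Δ_le_Δmax j k])
  have hsum : lam j ≤ ∑ i, lam i :=
    Finset.single_le_sum (fun i _ => hlam i) (Finset.mem_univ j)
  linarith [hslack j hlam_pos, S.η_nonneg j]

/-- if `(p̃, λ)` satisfies the KKT conditions at `θ ≥ 0`, then
`λ_j < max_k Δ_{j,k}` for every `j`. -/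
theorem kkt_lam_lt_maxDelta (S : StarSetting) (θ : ℝ) (hθ : 0 ≤ θ)
    (p : EuclideanSpace ℝ S.Idx) (lam : Fin S.J → ℝ)
    (h : S.KKT θ p lam) :
    ∀ j, lam j < S.Δmax j :=
  kkt_lam_lt_maxDelta_general S θ p lam h
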